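/- Let H be a Hopf algebra, B a left coideal subalgebra with inclusion ι and quotient π : H → H/B⁺H, and ζ : H → B a convolution-invertible left B-module map with inverse ζ̄. Define γ(π(h)) = Σ ι(ζ̄(h₍₁₎))h₍₂₎. Then (ι∘ζ) ∗ (γ∘π) = id_H in the convolution algebra End_k(H), i.e. Σ ι(ζ(h₍₁₎))·γ(π(h₍₂₎)) = h for all h ∈ H. -/

import Mathlib

/-! Since γ∘π = (ι∘ζ̄) ∗ id, associativity of convolution gives
(ι∘ζ) ∗ (γ∘π) = ((ι∘ζ) ∗ (ι∘ζ̄)) ∗ id, and the algebra map ι carries ζ ∗ ζ̄ = ηε to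
(ι∘ζ) ∗ (ι∘ζ̄) = ηε, the unit of the convolution algebra. -/

open TensorProduct

noncomputable def convMap (k : Type*) {H M : Type*} [CommSemiring k]
    [AddCommMonoid H] [Module k H] [Coalgebra k H] [Semiring M] [Algebra k M]
    (f g : H →ₗ[k] M) : H →ₗ[k] M :=
  LinearMap.mul' k M ∘ₗ TensorProduct.map f g ∘ₗ Coalgebra.comul

open WithConv

section Convolution

-- `convMap` is definitionally the product of Mathlib's convolution algebra `WithConv (C →ₗ[k] A)`.
variable {k C A M : Type*} [CommSemiring k] [AddCommMonoid C] [Module k C] [Coalgebra k C]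
  [Semiring A] [Algebra k A] [Semiring M] [Algebra k M]

theorem convMap_assoc (f g p : C →ₗ[k] A) :
    convMap k f (convMap k g p) = convMap k (convMap k f g) p :=
  congrArg ofConv (mul_assoc (toConv f) (toConv g) (toConv p)).symm

theorem convMap_counit_left (f : C →ₗ[k] A) :
    convMap k (Algebra.linearMap k A ∘ₗ Coalgebra.counit) f = f :=
  congrArg ofConv (one_mul (toConv f))

theorem AlgHom.comp_convMap (φ : A →ₐ[k] M) (f g : C →ₗ[k] A) :
    φ.toLinearMap ∘ₗ convMap k f g = convMap k (φ.toLinearMap ∘ₗ f) (φ.toLinearMap ∘ₗ g) :=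
  LinearMap.algHom_comp_convMul_distrib φ (toConv f) (toConv g)

end Convolution

theorem stmt2 {k H : Type*} [Field k] [Ring H] [HopfAlgebra k H]
    (B : Subalgebra k H)
    (ζ ζbar : H →ₗ[k] B)
    (hinv₁ : convMap k ζ ζbar =
      (Algebra.linearMap k B) ∘ₗ (Coalgebra.counit : H →ₗ[k] k)) :
    -- Σ ι(ζ(h₍₁₎)) · (γ∘π)(h₍₂₎) = h, where (γ∘π)(h) = Σ ι(ζ̄(h₍₁₎))h₍₂₎
    ∀ h : H,
      convMap k (B.val.toLinearMap ∘ₗ ζ)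
        (LinearMap.mul' k H ∘ₗ
          TensorProduct.map (B.val.toLinearMap ∘ₗ ζbar) (LinearMap.id) ∘ₗ
          Coalgebra.comul) h = h := by
  intro h
  have hιζ : convMap k (B.val.toLinearMap ∘ₗ ζ) (B.val.toLinearMap ∘ₗ ζbar) =
      Algebra.linearMap k H ∘ₗ Coalgebra.counit := by
    rw [← AlgHom.comp_convMap, hinv₁]
    ext
    simp
  have hγπ : LinearMap.mul' k H ∘ₗ TensorProduct.map (B.val.toLinearMap ∘ₗ ζbar) LinearMap.id ∘ₗ
      Coalgebra.comul = convMap k (B.val.toLinearMap ∘ₗ ζbar) LinearMap.id :=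
    rfl
  rw [hγπ, convMap_assoc, hιζ, convMap_counit_left, LinearMap.id_apply]
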